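/- arXiv:1011.6553 — 2 statements merged into one kernel-verified Lean document; each statement's English description precedes it below -/
import Mathlib

section
/- If X is an L-embedded Banach space, then for every bounded sequence (x_k) in X, 2·d(clust_{X**}(x_k), X) ≤ δ̃(x_k), where δ̃(x_k) is the infimum of δ_X over subsequences and d(A,X) = inf_{a∈A} dist(a,X). -/
open Filter Topology NormedSpace

/-- The set of weak* cluster points in the bidual of a sequence `(x k)` in `X`. -/
def weakStarClusterPoints {X : Type*} [NormedAddCommGroup X] [NormedSpace ℝ X]
    (x : ℕ → X) : Set (StrongDual ℝ (StrongDual ℝ X)) :=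
  {y | MapClusterPt (StrongDual.toWeakDual y) atTop
        fun k => StrongDual.toWeakDual (inclusionInDoubleDual ℝ X (x k))}

/-- `δ_X (x k)`: the (norm) diameter of the set of weak* cluster points of `(x k)` in `X**`. -/
noncomputable def deltaSeq {X : Type*} [NormedAddCommGroup X] [NormedSpace ℝ X]
    (x : ℕ → X) : ℝ :=
  Metric.diam (weakStarClusterPoints x)

/-- `δ̃ (x k)`: the infimum of `δ_X` over all subsequences of `(x k)`. -/
noncomputable def deltaTilde {X : Type*} [NormedAddCommGroup X] [NormedSpace ℝ X]
    (x : ℕ → X) : ℝ :=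
  sInf {d : ℝ | ∃ φ : ℕ → ℕ, StrictMono φ ∧ d = deltaSeq (x ∘ φ)}

/-- `d(A, X)`: the distance from `A ⊆ X**` to (the canonical image of) `X`, i.e.
`inf_{a ∈ A} dist (a, X)`. -/
noncomputable def dLow {X : Type*} [NormedAddCommGroup X] [NormedSpace ℝ X]
    (A : Set (StrongDual ℝ (StrongDual ℝ X))) : ℝ :=
  sInf ((fun y => Metric.infDist y (Set.range fun v : X => inclusionInDoubleDual ℝ X v)) '' A)

/-- `X` is `L`-embedded: there is a linear projection of `X**` onto the canonical copy of `X`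
satisfying `‖y‖ = ‖Py‖ + ‖y - Py‖` for all `y ∈ X**`. -/
def IsLEmbedded (X : Type*) [NormedAddCommGroup X] [NormedSpace ℝ X] : Prop :=
  ∃ P : StrongDual ℝ (StrongDual ℝ X) →ₗ[ℝ] StrongDual ℝ (StrongDual ℝ X),
    (∀ y, P (P y) = P y) ∧
    Set.range P = Set.range (fun v : X => inclusionInDoubleDual ℝ X v) ∧
    ∀ y, ‖y‖ = ‖P y‖ + ‖y - P y‖

/-!
Fix a subsequence and a weak* cluster point `u` of it. The `L`-projection `P` writes
`u = J b + s` with `b ∈ X`, `s = u - P u`, `‖s‖ ≥ d := d(clust(x), X)`, and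
`‖w + t • s‖ = ‖w‖ + |t| ‖s‖` for all `w ∈ J(X)`. Weak* lower semicontinuity of the norm, made
uniform on finite-dimensional subspaces by compactness, then yields a further subsequence
`vᵢ = x (kᵢ) - b` with the lower `ℓ¹` estimate `‖∑ aᵢ vᵢ‖ ≥ (d - ε) ∑ |aᵢ|`. By Hahn–Banach
there are norm-one functionals `f` with `(-1)ⁱ f (vᵢ) ≥ d - ε` for `i < n`; a weak* limit of
them separates a cluster point along the even indices from one along the odd indices by
`2 (d - ε)`.
-/

open Metric

section WeakStar

variable {E : Type*} [NormedAddCommGroup E] [NormedSpace ℝ E] {ι : Type*}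

theorem exists_norm_le_tendsto_toWeakDual (U : Ultrafilter ι) {g : ι → StrongDual ℝ E} {C : ℝ}
    (hg : ∀ i, ‖g i‖ ≤ C) :
    ∃ L : StrongDual ℝ E, ‖L‖ ≤ C ∧
      Tendsto (fun i => StrongDual.toWeakDual (g i)) U (𝓝 (StrongDual.toWeakDual L)) := by
  obtain ⟨L, hLC, hL⟩ := (WeakDual.isCompact_closedBall 0 C).ultrafilter_le_nhds
    (U.map fun i => StrongDual.toWeakDual (g i))
    (le_principal_iff.2 <| Ultrafilter.mem_map.2 <| univ_mem' fun i => by simpa using hg i)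
  exact ⟨WeakDual.toStrongDual L, by simpa using hLC, hL⟩

theorem tendsto_apply_of_tendsto_toWeakDual {l : Filter ι} {g : ι → StrongDual ℝ E}
    {L : StrongDual ℝ E}
    (h : Tendsto (fun i => StrongDual.toWeakDual (g i)) l (𝓝 (StrongDual.toWeakDual L))) (e : E) :
    Tendsto (fun i => g i e) l (𝓝 (L e)) :=
  ((WeakDual.eval_continuous e).tendsto _).comp h

theorem eventually_lt_norm_of_tendsto_toWeakDual {l : Filter ι} {g : ι → StrongDual ℝ E}
    {L : StrongDual ℝ E}
    (h : Tendsto (fun i => StrongDual.toWeakDual (g i)) l (𝓝 (StrongDual.toWeakDual L)))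
    {r : ℝ} (hr : r < ‖L‖) : ∀ᶠ i in l, r < ‖g i‖ := by
  by_contra hfreq
  simp only [not_eventually, not_lt] at hfreq
  have := (WeakDual.isClosed_closedBall 0 r).mem_of_frequently_of_tendsto
    (hfreq.mono fun i hi => by simpa using hi) h
  rw [Set.mem_preimage, mem_closedBall_zero_iff] at this
  exact hr.not_ge this

end WeakStar

theorem ContinuousLinearMap.eventually_norm_le_add_mul_norm {ι E F : Type*}
    [NormedAddCommGroup E] [NormedSpace ℝ E] [FiniteDimensional ℝ E]
    [NormedAddCommGroup F] [NormedSpace ℝ F] {l : Filter ι}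
    (A : E →L[ℝ] F) (B : ι → E →L[ℝ] F) {C : ℝ} (hB : ∀ i, ‖B i‖ ≤ C)
    (hAB : ∀ p, ∀ r < ‖A p‖, ∀ᶠ i in l, r < ‖B i p‖) {δ : ℝ} (hδ : 0 < δ) :
    ∀ᶠ i in l, ∀ p, ‖A p‖ ≤ ‖B i p‖ + δ * ‖p‖ := by
  have hP : ∀ q ∈ closedBall (0 : E) 1,
      ∀ᶠ x : ι × E in l ×ˢ 𝓝 q, ‖A x.2‖ < ‖B x.1 x.2‖ + δ := by
    intro q _
    have hnear : ∀ᶠ p in 𝓝 q, (‖A‖ + C) * ‖p - q‖ < δ / 2 := by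
      have : Tendsto (fun p => (‖A‖ + C) * ‖p - q‖) (𝓝 q) (𝓝 ((‖A‖ + C) * ‖q - q‖)) :=
        ((tendsto_id.sub_const q).norm).const_mul _
      rw [sub_self, norm_zero, mul_zero] at this
      exact this.eventually (gt_mem_nhds (by positivity))
    filter_upwards [(hAB q (‖A q‖ - δ / 2) (by linarith)).prod_mk hnear] with ⟨i, p⟩ ⟨hq, hp⟩
    have hAp : ‖A p‖ ≤ ‖A q‖ + ‖A‖ * ‖p - q‖ := by
      calc ‖A p‖ = ‖A q + A (p - q)‖ := by rw [map_sub, add_sub_cancel]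
        _ ≤ ‖A q‖ + ‖A (p - q)‖ := norm_add_le _ _
        _ ≤ ‖A q‖ + ‖A‖ * ‖p - q‖ := by gcongr; exact A.le_opNorm _
    have hBq : ‖B i q‖ ≤ ‖B i p‖ + C * ‖p - q‖ := by
      calc ‖B i q‖ = ‖B i p - B i (p - q)‖ := by rw [map_sub, sub_sub_cancel]
        _ ≤ ‖B i p‖ + ‖B i (p - q)‖ := norm_sub_le _ _
        _ ≤ ‖B i p‖ + C * ‖p - q‖ := by gcongr; exact (B i).le_of_opNorm_le (hB i) _
    dsimp only at hq hp ⊢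
    linarith
  have hball : ∀ᶠ i in l, ∀ p ∈ closedBall (0 : E) 1, ‖A p‖ < ‖B i p‖ + δ :=
    (Eventually.curry ((isCompact_closedBall (0 : E) 1).mem_prod_nhdsSet_of_forall hP)).mono
      fun _ hi => hi.self_of_nhdsSet
  filter_upwards [hball] with i hi p
  rcases eq_or_ne p 0 with rfl | hp
  · simp
  have hp' : 0 < ‖p‖ := norm_pos_iff.2 hp
  have := hi (‖p‖⁻¹ • p) (by simp [norm_smul, hp'.ne'])
  rw [map_smul, map_smul, norm_smul, norm_smul, norm_inv, norm_norm] at this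
  have := mul_le_mul_of_nonneg_left this.le hp'.le
  field_simp at this
  linarith

section Combination

variable {ι F : Type*} [Fintype ι] [NormedAddCommGroup F] [NormedSpace ℝ F]

noncomputable def sumSMulAddSMulCLM (v : ι → F) (w : F) : ((ι → ℝ) × ℝ) →L[ℝ] F :=
  (Fintype.linearCombination ℝ v ∘ₗ LinearMap.fst ℝ _ ℝ +
    (LinearMap.snd ℝ (ι → ℝ) ℝ).smulRight w).toContinuousLinearMap

@[simp]
theorem sumSMulAddSMulCLM_apply (v : ι → F) (w : F) (p : (ι → ℝ) × ℝ) :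
    sumSMulAddSMulCLM v w p = ∑ i, p.1 i • v i + p.2 • w := by
  simp [sumSMulAddSMulCLM, Fintype.linearCombination_apply]

theorem norm_le_sum_abs_add_abs (p : (ι → ℝ) × ℝ) : ‖p‖ ≤ ∑ i, |p.1 i| + |p.2| := by
  have h1 : ‖p.1‖ ≤ ∑ i, |p.1 i| :=
    (pi_norm_le_iff_of_nonneg (by positivity)).2 fun i =>
      Finset.single_le_sum (f := fun i => |p.1 i|) (fun _ _ => abs_nonneg _) (Finset.mem_univ i)
  rw [Prod.norm_def, Real.norm_eq_abs]
  have h2 : 0 ≤ ∑ i, |p.1 i| := Finset.sum_nonneg fun i _ => abs_nonneg _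
  exact max_le (by linarith [abs_nonneg p.2]) (by linarith)

theorem norm_sumSMulAddSMulCLM_le (v : ι → F) (w : F) :
    ‖sumSMulAddSMulCLM v w‖ ≤ ∑ i, ‖v i‖ + ‖w‖ := by
  refine ContinuousLinearMap.opNorm_le_bound _ (by positivity) fun p => ?_
  rw [sumSMulAddSMulCLM_apply, add_mul, Finset.sum_mul]
  refine (norm_add_le _ _).trans (add_le_add ((norm_sum_le _ _).trans
    (Finset.sum_le_sum fun i _ => ?_)) ?_)
  · rw [norm_smul, mul_comm]
    gcongr
    exact (norm_le_pi_norm p.1 i).trans (norm_fst_le p)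
  · rw [norm_smul, mul_comm]
    gcongr
    exact norm_snd_le p

end Combination

theorem eventually_norm_sum_smul_add_smul_le {E ι κ : Type*} [NormedAddCommGroup E]
    [NormedSpace ℝ E] [Fintype ι] {l : Filter κ} (v : ι → StrongDual ℝ E)
    {g : κ → StrongDual ℝ E} {u : StrongDual ℝ E} {C : ℝ} (hg : ∀ k, ‖g k‖ ≤ C)
    (hgu : Tendsto (fun k => StrongDual.toWeakDual (g k)) l (𝓝 (StrongDual.toWeakDual u)))
    {δ : ℝ} (hδ : 0 < δ) :
    ∀ᶠ k in l, ∀ (a : ι → ℝ) (t : ℝ),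
      ‖∑ i, a i • v i + t • u‖ ≤ ‖∑ i, a i • v i + t • g k‖ + δ * (∑ i, |a i| + |t|) := by
  have hB : ∀ k, ‖sumSMulAddSMulCLM v (g k)‖ ≤ ∑ i, ‖v i‖ + C := fun k =>
    (norm_sumSMulAddSMulCLM_le v (g k)).trans (by linarith [hg k])
  have hAB : ∀ p, ∀ r < ‖sumSMulAddSMulCLM v u p‖,
      ∀ᶠ k in l, r < ‖sumSMulAddSMulCLM v (g k) p‖ := by
    intro p r hr
    refine eventually_lt_norm_of_tendsto_toWeakDual ?_ hr
    simpa only [sumSMulAddSMulCLM_apply, map_add, map_smul] using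
      tendsto_const_nhds.add (hgu.const_smul p.2)
  filter_upwards [(sumSMulAddSMulCLM v u).eventually_norm_le_add_mul_norm _ hB hAB hδ]
    with k hk a t
  have hnorm := mul_le_mul_of_nonneg_left (norm_le_sum_abs_add_abs (a, t)) hδ.le
  have hkat := hk (a, t)
  simp only [sumSMulAddSMulCLM_apply] at hkat hnorm
  linarith

theorem exists_seq_forall_mem {α : Type*} [Nonempty α] (G : ℕ → (ℕ → α) → Set α)
    (hG : ∀ n κ, (G n κ).Nonempty)
    (hloc : ∀ n κ κ', (∀ i < n, κ i = κ' i) → G n κ = G n κ') :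
    ∃ κ : ℕ → α, ∀ n, κ n ∈ G n κ := by
  choose pick hpick using hG
  -- `pre n` is the sequence whose first `n` terms are chosen
  let pre : ℕ → ℕ → α := fun n =>
    Nat.rec (fun _ => Classical.arbitrary α) (fun m p => Function.update p m (pick m p)) n
  have pre_succ : ∀ n, pre (n + 1) = Function.update (pre n) n (pick n (pre n)) := fun _ => rfl
  have pre_stable : ∀ i n, i < n → pre n i = pre (i + 1) i := by
    intro i n hin
    induction n, hin using Nat.le_induction with
    | base => rfl
    | succ n hin ih => rw [pre_succ, Function.update_of_ne (by omega), ih]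
  refine ⟨fun n => pre (n + 1) n, fun n => ?_⟩
  rw [hloc n _ (pre n) fun i hi => (pre_stable i n hi).symm]
  simpa only [pre_succ, Function.update_self] using hpick n (pre n)

theorem sub_mul_sum_abs_le_norm_sum {E : Type*} [SeminormedAddCommGroup E] [NormedSpace ℝ E]
    (y : ℕ → E) (u : E) (s : ℝ) (e : ℕ → ℝ) (he : ∀ n, 0 ≤ e n)
    (hsplit : ∀ n (a : ℕ → ℝ) (t : ℝ),
      ‖∑ i ∈ Finset.range n, a i • y i‖ + s * |t| ≤ ‖∑ i ∈ Finset.range n, a i • y i + t • u‖)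
    (hclose : ∀ n (a : ℕ → ℝ) (t : ℝ),
      ‖∑ i ∈ Finset.range n, a i • y i + t • u‖ ≤
        ‖∑ i ∈ Finset.range n, a i • y i + t • y n‖ + e n * (∑ i ∈ Finset.range n, |a i| + |t|))
    (n : ℕ) (a : ℕ → ℝ) :
    (s - ∑ j ∈ Finset.range n, e j) * ∑ i ∈ Finset.range n, |a i| ≤
      ‖∑ i ∈ Finset.range n, a i • y i‖ := by
  induction n with
  | zero => simp
  | succ n ih =>
    set w := ∑ i ∈ Finset.range n, a i • y i
    set S := ∑ i ∈ Finset.range n, |a i|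
    have hE : 0 ≤ ∑ j ∈ Finset.range n, e j := Finset.sum_nonneg fun j _ => he j
    rw [Finset.sum_range_succ, Finset.sum_range_succ, Finset.sum_range_succ]
    calc (s - (∑ j ∈ Finset.range n, e j + e n)) * (S + |a n|)
        ≤ (s - ∑ j ∈ Finset.range n, e j) * S + s * |a n| - e n * (S + |a n|) := by
          nlinarith [abs_nonneg (a n)]
      _ ≤ ‖w‖ + s * |a n| - e n * (S + |a n|) := by linarith
      _ ≤ ‖w + a n • u‖ - e n * (S + |a n|) := by linarith [hsplit n a (a n)]
      _ ≤ ‖w + a n • y n‖ := by linarith [hclose n a (a n)]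

theorem exists_norm_le_one_forall_le_apply {E ι : Type*} [NormedAddCommGroup E]
    [NormedSpace ℝ E] [Fintype ι] (v : ι → E) {r : ℝ} (hr : 0 < r)
    (h : ∀ a : ι → ℝ, r * ∑ i, |a i| ≤ ‖∑ i, a i • v i‖) :
    ∃ f : StrongDual ℝ E, ‖f‖ ≤ 1 ∧ ∀ i, r ≤ f (v i) := by
  set T := Fintype.linearCombination ℝ v
  have hdisj : Disjoint (ball (0 : E) r) (T '' stdSimplex ℝ ι) := by
    rw [Set.disjoint_right]
    rintro _ ⟨a, ha, rfl⟩ hball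
    have habs : ∑ i, |a i| = 1 := by simpa [abs_of_nonneg (ha.1 _)] using ha.2
    have := h a
    rw [mem_ball_zero_iff] at hball
    simp only [T, Fintype.linearCombination_apply, habs] at hball this
    linarith
  obtain ⟨f, c, hfc, hcf⟩ := geometric_hahn_banach_open (convex_ball 0 r) isOpen_ball
    ((convex_stdSimplex ℝ ι).linear_image T) hdisj
  have hc : 0 < c := by simpa using hfc 0 (mem_ball_self hr)
  have hle : closedBall (0 : E) r ⊆ {z | f z ≤ c} := by
    rw [← closure_ball 0 hr.ne']
    exact closure_minimal (fun z hz => (hfc z hz).le) (isClosed_le f.continuous continuous_const)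
  have hf : ‖f‖ ≤ c / r := by
    refine f.opNorm_bound_of_ball_bound hr c fun z hz => ?_
    have hneg : -z ∈ closedBall (0 : E) r := by simpa using hz
    have hz' : f z ≤ c := hle hz
    have hneg' : f (-z) ≤ c := hle hneg
    rw [map_neg] at hneg'
    rw [Real.norm_eq_abs, abs_le]
    constructor <;> linarith
  refine ⟨(r / c) • f, ?_, fun i => ?_⟩
  · rw [norm_smul, Real.norm_of_nonneg (by positivity)]
    calc r / c * ‖f‖ ≤ r / c * (c / r) := by gcongr
      _ = 1 := by field_simp
  · classical
    have hvi := hcf (v i) ⟨Pi.single i 1, single_mem_stdSimplex ℝ i, by simp [T]⟩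
    show r ≤ r / c * f (v i)
    calc r = r / c * c := by field_simp
      _ ≤ r / c * f (v i) := by gcongr

section ClusterPoints

variable {X : Type*} [NormedAddCommGroup X] [NormedSpace ℝ X]

@[simp]
theorem norm_inclusionInDoubleDual_apply (x : X) : ‖inclusionInDoubleDual ℝ X x‖ = ‖x‖ :=
  (inclusionInDoubleDualLi ℝ).norm_map x

theorem mem_weakStarClusterPoints_of_tendsto {x : ℕ → X} {l : Filter ℕ} [l.NeBot]
    (hl : l ≤ atTop) {t : StrongDual ℝ (StrongDual ℝ X)}
    (h : Tendsto (fun k => StrongDual.toWeakDual (inclusionInDoubleDual ℝ X (x k))) l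
      (𝓝 (StrongDual.toWeakDual t))) :
    t ∈ weakStarClusterPoints x :=
  h.mapClusterPt.mono hl

theorem weakStarClusterPoints_comp_subset (x : ℕ → X) {φ : ℕ → ℕ} (hφ : StrictMono φ) :
    weakStarClusterPoints (x ∘ φ) ⊆ weakStarClusterPoints x :=
  fun _ ht => ht.of_comp hφ.tendsto_atTop

theorem norm_le_of_mem_weakStarClusterPoints {x : ℕ → X} {M : ℝ} (hM : ∀ k, ‖x k‖ ≤ M)
    {t : StrongDual ℝ (StrongDual ℝ X)} (ht : t ∈ weakStarClusterPoints x) : ‖t‖ ≤ M := by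
  simpa using (WeakDual.isClosed_closedBall 0 M).mem_of_mapClusterPt ht
    (Eventually.of_forall fun k => by simpa using hM k)

theorem add_mem_weakStarClusterPoints_of_sub {x : ℕ → X} {b : X}
    {t : StrongDual ℝ (StrongDual ℝ X)} (ht : t ∈ weakStarClusterPoints fun k => x k - b) :
    t + inclusionInDoubleDual ℝ X b ∈ weakStarClusterPoints x := by
  have := ht.tendsto_comp ((continuous_add_const
    (StrongDual.toWeakDual (inclusionInDoubleDual ℝ X b))).tendsto _)
  simpa [weakStarClusterPoints, Function.comp_def] using this

end ClusterPoints

theorem exists_mem_weakStarClusterPoints_two_mul_le_norm_sub_of_mul_le_norm_sum {X : Type*}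
    [NormedAddCommGroup X] [NormedSpace ℝ X] (v : ℕ → X) {C r : ℝ} (hC : ∀ k, ‖v k‖ ≤ C)
    (hr : 0 < r)
    (h : ∀ n (a : ℕ → ℝ), r * ∑ i ∈ Finset.range n, |a i| ≤ ‖∑ i ∈ Finset.range n, a i • v i‖) :
    ∃ t₁ ∈ weakStarClusterPoints v, ∃ t₂ ∈ weakStarClusterPoints v, 2 * r ≤ ‖t₁ - t₂‖ := by
  have hsep : ∀ n, ∃ f : StrongDual ℝ X, ‖f‖ ≤ 1 ∧ ∀ i < n, r ≤ (-1) ^ i * f (v i) := by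
    intro n
    obtain ⟨f, hf1, hf⟩ := exists_norm_le_one_forall_le_apply
      (fun i : Fin n => ((-1 : ℝ) ^ (i : ℕ)) • v i) hr fun a => by
        simpa [Finset.sum_range, smul_smul, abs_mul] using
          h n fun j => if hj : j < n then a ⟨j, hj⟩ * (-1) ^ j else 0
    exact ⟨f, hf1, fun i hi => by simpa using hf ⟨i, hi⟩⟩
  choose f hf1 hf using hsep
  let U := Ultrafilter.of (atTop : Filter ℕ)
  have hU : ↑U ≤ (atTop : Filter ℕ) := Ultrafilter.of_le _
  obtain ⟨L, hL1, hfL⟩ := exists_norm_le_tendsto_toWeakDual U hf1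
  have hL : ∀ i, r ≤ (-1) ^ i * L (v i) := fun i =>
    ge_of_tendsto ((tendsto_apply_of_tendsto_toWeakDual hfL (v i)).const_mul _)
      ((Eventually.filter_mono hU (eventually_gt_atTop i)).mono fun n hn => hf n i hn)
  have hJ : ∀ k, ‖inclusionInDoubleDual ℝ X (v k)‖ ≤ C := by simpa using hC
  obtain ⟨t₁, -, ht₁⟩ := exists_norm_le_tendsto_toWeakDual U fun i => hJ (2 * i)
  obtain ⟨t₂, -, ht₂⟩ := exists_norm_le_tendsto_toWeakDual U fun i => hJ (2 * i + 1)
  have hmono₁ : StrictMono fun i : ℕ => 2 * i := fun _ _ h => by dsimp only; omega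
  have hmono₂ : StrictMono fun i : ℕ => 2 * i + 1 := fun _ _ h => by dsimp only; omega
  refine ⟨t₁, weakStarClusterPoints_comp_subset v hmono₁
      (mem_weakStarClusterPoints_of_tendsto hU ht₁),
    t₂, weakStarClusterPoints_comp_subset v hmono₂ (mem_weakStarClusterPoints_of_tendsto hU ht₂),
    ?_⟩
  have h₁ : r ≤ t₁ L := ge_of_tendsto (tendsto_apply_of_tendsto_toWeakDual ht₁ L)
    (Eventually.of_forall fun i => by simpa [pow_mul] using hL (2 * i))
  have h₂ : t₂ L ≤ -r := le_of_tendsto (tendsto_apply_of_tendsto_toWeakDual ht₂ L)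
    (Eventually.of_forall fun i => by
      have := hL (2 * i + 1)
      rw [pow_succ, pow_mul, neg_one_sq, one_pow, one_mul, neg_one_mul] at this
      simp only [dual_def]
      linarith)
  calc 2 * r ≤ (t₁ - t₂) L := by change 2 * r ≤ t₁ L - t₂ L; linarith
    _ ≤ ‖t₁ - t₂‖ * ‖L‖ := (le_abs_self _).trans ((t₁ - t₂).le_opNorm L)
    _ ≤ ‖t₁ - t₂‖ := mul_le_of_le_one_right (norm_nonneg _) hL1

theorem exists_strictMono_mul_sum_abs_le_norm_sum {E : Type*} [NormedAddCommGroup E]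
    [NormedSpace ℝ E] (W : Submodule ℝ (StrongDual ℝ E)) (y : ℕ → StrongDual ℝ E)
    (hyW : ∀ k, y k ∈ W) {C : ℝ} (hC : ∀ k, ‖y k‖ ≤ C) (U : Ultrafilter ℕ)
    (hU : (U : Filter ℕ) ≤ atTop) {u : StrongDual ℝ E}
    (hu : Tendsto (fun k => StrongDual.toWeakDual (y k)) ↑U (𝓝 (StrongDual.toWeakDual u)))
    {s : ℝ} (hsplit : ∀ w ∈ W, ∀ t : ℝ, ‖w‖ + s * |t| ≤ ‖w + t • u‖) {ε : ℝ} (hε : 0 < ε) :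
    ∃ k : ℕ → ℕ, StrictMono k ∧ ∀ n (a : ℕ → ℝ),
      (s - ε) * ∑ i ∈ Finset.range n, |a i| ≤ ‖∑ i ∈ Finset.range n, a i • y (k i)‖ := by
  set e : ℕ → ℝ := fun n => ε / 2 * (1 / 2) ^ n
  have he : ∀ n, 0 < e n := fun n => by positivity
  have hsum : ∀ n, ∑ j ∈ Finset.range n, e j ≤ ε := fun n => by
    rw [← Finset.mul_sum]
    nlinarith [sum_geometric_two_le n]
  let G : ℕ → (ℕ → ℕ) → Set ℕ := fun n κ =>
    {m | (∀ i : Fin n, κ i < m) ∧ ∀ (a : Fin n → ℝ) (t : ℝ),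
      ‖∑ i, a i • y (κ i) + t • u‖ ≤
        ‖∑ i, a i • y (κ i) + t • y m‖ + e n * (∑ i, |a i| + |t|)}
  have hGU : ∀ n κ, G n κ ∈ U := fun n κ =>
    (Eventually.filter_mono hU (eventually_all.2 fun i : Fin n => eventually_gt_atTop (κ i))).and
      (eventually_norm_sum_smul_add_smul_le (fun i : Fin n => y (κ i)) hC hu (he n))
  obtain ⟨k, hk⟩ := exists_seq_forall_mem G (fun n κ => U.nonempty_of_mem (hGU n κ))
    fun n κ κ' h => by simp only [G, fun i : Fin n => h i i.2]
  refine ⟨k, strictMono_nat_of_lt_succ fun n => (hk (n + 1)).1 (Fin.last n), fun n a => ?_⟩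
  have hl1 := sub_mul_sum_abs_le_norm_sum (fun i => y (k i)) u s e (fun n => (he n).le)
    (fun n a t => hsplit _ (W.sum_mem fun i _ => W.smul_mem _ (hyW _)) t)
    (fun n a t => by simpa only [Finset.sum_range] using (hk n).2 (fun i => a i) t) n a
  have habs : 0 ≤ ∑ i ∈ Finset.range n, |a i| := Finset.sum_nonneg fun i _ => abs_nonneg _
  nlinarith [hsum n]

theorem norm_add_smul_sub_apply_of_norm_eq {Y : Type*} [SeminormedAddCommGroup Y]
    [NormedSpace ℝ Y] {P : Y →ₗ[ℝ] Y} (hPP : ∀ y, P (P y) = P y)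
    (hPnorm : ∀ y, ‖y‖ = ‖P y‖ + ‖y - P y‖) {w : Y} (hw : P w = w) (u : Y) (t : ℝ) :
    ‖w + t • (u - P u)‖ = ‖w‖ + |t| * ‖u - P u‖ := by
  rw [hPnorm (w + t • (u - P u)), map_add, map_smul, map_sub, hPP, sub_self, smul_zero, add_zero,
    hw, add_sub_cancel_left, norm_smul, Real.norm_eq_abs]

theorem IsLEmbedded.exists_mem_weakStarClusterPoints_two_mul_le_norm_sub {X : Type*}
    [NormedAddCommGroup X] [NormedSpace ℝ X] (hL : IsLEmbedded X) {x : ℕ → X} {M : ℝ}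
    (hM : ∀ k, ‖x k‖ ≤ M) {d r : ℝ}
    (hd : ∀ t ∈ weakStarClusterPoints x,
      d ≤ infDist t (Set.range fun v : X => inclusionInDoubleDual ℝ X v))
    (hr : 0 < r) (hrd : r < d) :
    ∃ t₁ ∈ weakStarClusterPoints x, ∃ t₂ ∈ weakStarClusterPoints x, 2 * r ≤ ‖t₁ - t₂‖ := by
  obtain ⟨P, hPP, hPrange, hPnorm⟩ := hL
  set J := inclusionInDoubleDual ℝ X
  have hPJ : ∀ v, P (J v) = J v := fun v => by
    obtain ⟨w, hw⟩ : J v ∈ Set.range P := hPrange ▸ Set.mem_range_self v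
    rw [← hw, hPP]
  let U := Ultrafilter.of (atTop : Filter ℕ)
  have hU : (U : Filter ℕ) ≤ atTop := Ultrafilter.of_le _
  obtain ⟨u, -, hu⟩ := exists_norm_le_tendsto_toWeakDual U fun k =>
    (norm_inclusionInDoubleDual_apply (x k)).trans_le (hM k)
  obtain ⟨b, hb⟩ : P u ∈ Set.range fun v : X => J v := hPrange ▸ Set.mem_range_self u
  have hdu : d ≤ ‖u - P u‖ := by
    rw [← dist_eq_norm, ← hb]
    exact (hd u (mem_weakStarClusterPoints_of_tendsto hU hu)).trans
      (infDist_le_dist_of_mem ⟨b, rfl⟩)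
  have hsplit : ∀ w ∈ LinearMap.range J.toLinearMap, ∀ t : ℝ,
      ‖w‖ + d * |t| ≤ ‖w + t • (u - P u)‖ := by
    rintro _ ⟨v, rfl⟩ t
    change ‖J v‖ + d * |t| ≤ ‖J v + t • (u - P u)‖
    have h := norm_add_smul_sub_apply_of_norm_eq (Y := StrongDual ℝ (StrongDual ℝ X)) (P := P)
      hPP hPnorm (hPJ v) u t
    rw [h, mul_comm]
    gcongr
  have hu' : Tendsto (fun k => StrongDual.toWeakDual (J (x k - b))) U
      (𝓝 (StrongDual.toWeakDual (u - P u))) := by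
    simpa only [map_sub, hb] using hu.sub_const (StrongDual.toWeakDual (P u))
  obtain ⟨k, hk, hl1⟩ := exists_strictMono_mul_sum_abs_le_norm_sum
    (LinearMap.range J.toLinearMap) (fun k => J (x k - b))
    (fun k => LinearMap.mem_range_self J.toLinearMap _)
    (fun k => (norm_inclusionInDoubleDual_apply _).trans_le
      ((norm_sub_le _ _).trans (add_le_add_left (hM k) _)))
    U hU hu' hsplit (show 0 < d - r by linarith)
  obtain ⟨t₁, ht₁, t₂, ht₂, hfar⟩ :=
    exists_mem_weakStarClusterPoints_two_mul_le_norm_sub_of_mul_le_norm_sum (fun i => x (k i) - b)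
      (fun i => (norm_sub_le _ _).trans (add_le_add_left (hM (k i)) _)) hr
    fun n a => by
      rw [← norm_inclusionInDoubleDual_apply, map_sum]
      simpa only [map_smul, sub_sub_cancel] using hl1 n a
  have hsub := weakStarClusterPoints_comp_subset (fun k => x k - b) hk
  exact ⟨_, add_mem_weakStarClusterPoints_of_sub (hsub ht₁),
    _, add_mem_weakStarClusterPoints_of_sub (hsub ht₂),
    hfar.trans_eq (congrArg norm (add_sub_add_right_eq_sub t₁ t₂ _)).symm⟩

theorem statement4_general {X : Type*} [NormedAddCommGroup X] [NormedSpace ℝ X]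
    (hL : IsLEmbedded X) (x : ℕ → X) (hb : ∃ M : ℝ, ∀ k, ‖x k‖ ≤ M) :
    2 * dLow (weakStarClusterPoints x) ≤ deltaTilde x := by
  obtain ⟨M, hM⟩ := hb
  refine le_csInf ⟨deltaSeq x, id, strictMono_id, rfl⟩ ?_
  rintro _ ⟨φ, hφ, rfl⟩
  have hd : ∀ t ∈ weakStarClusterPoints (x ∘ φ), dLow (weakStarClusterPoints x) ≤
      infDist t (Set.range fun v : X => inclusionInDoubleDual ℝ X v) := fun t ht =>
    csInf_le ⟨0, by rintro _ ⟨_, _, rfl⟩; exact infDist_nonneg⟩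
      ⟨t, weakStarClusterPoints_comp_subset x hφ ht, rfl⟩
  have hbdd : Bornology.IsBounded (weakStarClusterPoints (x ∘ φ)) :=
    (isBounded_closedBall (x := 0) (r := M)).subset fun t ht =>
      (dist_zero_right t).trans_le (norm_le_of_mem_weakStarClusterPoints (fun k => hM (φ k)) ht)
  refine le_of_forall_lt_imp_le_of_dense fun c hc => ?_
  rcases le_or_gt c 0 with hc0 | hc0
  · exact hc0.trans diam_nonneg
  obtain ⟨t₁, ht₁, t₂, ht₂, hfar⟩ :=
    hL.exists_mem_weakStarClusterPoints_two_mul_le_norm_sub (fun k => hM (φ k)) hd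
      (half_pos hc0) (by linarith)
  calc c = 2 * (c / 2) := by ring
    _ ≤ dist t₁ t₂ := hfar.trans_eq (dist_eq_norm t₁ t₂).symm
    _ ≤ deltaSeq (x ∘ φ) := dist_le_diam_of_mem hbdd ht₁ ht₂

/-- If `X` is an `L`-embedded Banach space, then for every bounded sequence
`(x k)` in `X`, `2 · d(clust_{X**}(x_k), X) ≤ δ̃(x_k)`. -/
theorem statement4 {X : Type*} [NormedAddCommGroup X] [NormedSpace ℝ X] [CompleteSpace X]
    (hL : IsLEmbedded X) (x : ℕ → X) (hb : ∃ M : ℝ, ∀ k, ‖x k‖ ≤ M) :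
    2 * dLow (weakStarClusterPoints x) ≤ deltaTilde x :=
  statement4_general hL x hb
end

section
/- For the sequence (e_k) of standard unit vectors in ℓ¹, every weak* cluster point x** of (e_k) in (ℓ¹)** satisfies dist(x**, ℓ¹) = 1, and the diameter of the set of weak* cluster points equals 2; moreover every subsequence has the same property, so δ̃(e_k) = 2. -/
open Filter Topology NormedSpace

/-- The sequence of standard unit vectors `e_k` in `ℓ¹`. -/
noncomputable def stdBasisSeq : ℕ → lp (fun _ : ℕ => ℝ) 1 := fun k =>
  lp.single 1 k (1 : ℝ)

/-!
Every weak* cluster point `y` of a subsequence `(e_{φ k})` has norm at most `1`, which gives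
`dist(y, ℓ¹) ≤ 1` and a cluster set of diameter at most `2`. For a sequence `f` bounded by `1`,
the functional `v ↦ ∑ f i v i` sends `e_{φ k}` to `f (φ k)`, so `y` takes the value `lim f (φ k)`
on it whenever that limit exists. Against `v ∈ ℓ¹`, take `f = -sign v` on a long initial segment
and `f = 1` afterwards: `y` takes the value `1`, `v` at most `ε`, so `‖y - v‖ ≥ 1 - ε`. Cluster
points along the even and along the odd terms of the subsequence (they exist by Banach–Alaoglu)
take the values `1` and `-1` on the `±1` indicator of the even-indexed positions, so they lie at
distance `2`.
-/

open scoped lp ENNReal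

section ClusterPoints

variable {X : Type*} [NormedAddCommGroup X] [NormedSpace ℝ X] {x : ℕ → X}
  {y : StrongDual ℝ (StrongDual ℝ X)}

lemma mapClusterPt_apply_of_mem_weakStarClusterPoints (hy : y ∈ weakStarClusterPoints x)
    (F : StrongDual ℝ X) : MapClusterPt (y F) atTop fun k => F (x k) :=
  hy.continuousAt_comp (WeakDual.eval_continuous F).continuousAt

lemma apply_eq_of_mem_weakStarClusterPoints (hy : y ∈ weakStarClusterPoints x)
    {F : StrongDual ℝ X} {L : ℝ} (hF : Tendsto (fun k => F (x k)) atTop (𝓝 L)) : y F = L :=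
  eq_of_nhds_neBot <| (mapClusterPt_apply_of_mem_weakStarClusterPoints hy F).clusterPt.mono hF

lemma toWeakDual_inclusionInDoubleDual_mem_closedBall {C : ℝ} (hx : ∀ k, ‖x k‖ ≤ C) (k : ℕ) :
    StrongDual.toWeakDual (inclusionInDoubleDual ℝ X (x k)) ∈
      WeakDual.toStrongDual ⁻¹' Metric.closedBall 0 C :=
  Set.mem_preimage.mpr <| Metric.mem_closedBall.mpr <|
    (dist_zero_right (E := StrongDual ℝ (StrongDual ℝ X)) _).trans_le <|
      (double_dual_bound ℝ X (x k)).trans (hx k)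

lemma norm_le_of_mem_weakStarClusterPoints_s7 {C : ℝ} (hx : ∀ k, ‖x k‖ ≤ C)
    (hy : y ∈ weakStarClusterPoints x) : ‖y‖ ≤ C := by
  simpa using (WeakDual.isClosed_closedBall 0 C).mem_of_mapClusterPt hy
    (Eventually.of_forall (toWeakDual_inclusionInDoubleDual_mem_closedBall hx))

lemma weakStarClusterPoints_nonempty {C : ℝ} (hx : ∀ k, ‖x k‖ ≤ C) :
    (weakStarClusterPoints x).Nonempty := by
  obtain ⟨z, -, hz⟩ := (WeakDual.isCompact_closedBall (𝕜 := ℝ) 0 C).exists_mapClusterPt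
    (f := atTop) (tendsto_principal.mpr <|
      Eventually.of_forall (toWeakDual_inclusionInDoubleDual_mem_closedBall hx))
  exact ⟨WeakDual.toStrongDual z, hz⟩

lemma weakStarClusterPoints_comp_subset_s7 {ψ : ℕ → ℕ} (hψ : Tendsto ψ atTop atTop) :
    weakStarClusterPoints (x ∘ ψ) ⊆ weakStarClusterPoints x :=
  fun _ hy => hy.of_comp hψ

lemma isBounded_weakStarClusterPoints {C : ℝ} (hx : ∀ k, ‖x k‖ ≤ C) :
    Bornology.IsBounded (weakStarClusterPoints x) :=
  isBounded_iff_forall_norm_le.mpr ⟨C, fun _ hy => norm_le_of_mem_weakStarClusterPoints_s7 hx hy⟩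

lemma diam_weakStarClusterPoints_le {C : ℝ} (hC : 0 ≤ C) (hx : ∀ k, ‖x k‖ ≤ C) :
    Metric.diam (weakStarClusterPoints x) ≤ 2 * C :=
  Metric.diam_le_of_forall_dist_le (by positivity) fun a ha b hb => calc
    dist a b ≤ ‖a‖ + ‖b‖ := dist_le_norm_add_norm a b
    _ ≤ C + C := add_le_add (norm_le_of_mem_weakStarClusterPoints_s7 hx ha)
        (norm_le_of_mem_weakStarClusterPoints_s7 hx hb)
    _ = 2 * C := by ring

lemma infDist_range_inclusionInDoubleDual_le_norm (z : StrongDual ℝ (StrongDual ℝ X)) :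
    Metric.infDist z (Set.range (inclusionInDoubleDual ℝ X)) ≤ ‖z‖ := by
  calc Metric.infDist z (Set.range (inclusionInDoubleDual ℝ X))
    _ ≤ dist z (inclusionInDoubleDual ℝ X 0) :=
      Metric.infDist_le_dist_of_mem (Set.mem_range_self 0)
    _ = ‖z‖ := by rw [dist_eq_norm z, map_zero, sub_zero z]

end ClusterPoints

lemma sub_apply_le_dist {E : Type*} [SeminormedAddCommGroup E] [NormedSpace ℝ E]
    (z w : StrongDual ℝ E) {u : E} (hu : ‖u‖ ≤ 1) : z u - w u ≤ dist z w := calc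
  z u - w u ≤ ‖(z - w) u‖ := Real.le_norm_self _
  _ ≤ ‖z - w‖ * 1 := (z - w).le_of_opNorm_le_of_le le_rfl hu
  _ = dist z w := by rw [mul_one, dist_eq_norm]

section WeightedSum

noncomputable def weightedSum (f : ℕ → ℝ) (hf : ∀ i, |f i| ≤ 1) : StrongDual ℝ ℓ¹(ℕ, ℝ) :=
  lp.dualPairing ∞ 1 (fun _ => ContinuousLinearMap.mul ℝ ℝ) (K := 1)
    (fun _ => ContinuousLinearMap.opNorm_mul_le ℝ ℝ)
    ⟨f, memℓp_infty ⟨1, Set.forall_mem_range.mpr fun i => (Real.norm_eq_abs _).trans_le (hf i)⟩⟩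

variable {f : ℕ → ℝ} {hf : ∀ i, |f i| ≤ 1}

lemma weightedSum_apply (v : ℓ¹(ℕ, ℝ)) : weightedSum f hf v = ∑' i, f i * v i := rfl

lemma norm_weightedSum_le : ‖weightedSum f hf‖ ≤ 1 :=
  ContinuousLinearMap.le_of_opNorm_le_of_le _ (lp.norm_dualPairing ..)
    (lp.norm_le_of_forall_le zero_le_one fun i => (Real.norm_eq_abs _).trans_le (hf i)) |>.trans_eq
    (one_mul 1)

lemma weightedSum_single (j : ℕ) : weightedSum f hf (lp.single 1 j 1) = f j := by
  rw [weightedSum_apply, tsum_eq_single j fun i hi => by rw [lp.single_apply_ne 1 j _ hi, mul_zero],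
    lp.single_apply_self, mul_one]

end WeightedSum

lemma norm_stdBasisSeq (k : ℕ) : ‖stdBasisSeq k‖ = 1 := by
  rw [stdBasisSeq, lp.norm_single zero_lt_one, norm_one]

section StdBasisSeq

variable {φ : ℕ → ℕ} {y : StrongDual ℝ (StrongDual ℝ ℓ¹(ℕ, ℝ))}

lemma weightedSum_eq_of_mem_weakStarClusterPoints
    (hy : y ∈ weakStarClusterPoints (stdBasisSeq ∘ φ)) {f : ℕ → ℝ} (hf : ∀ i, |f i| ≤ 1) {c : ℝ}
    (hfc : Tendsto (f ∘ φ) atTop (𝓝 c)) :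
    y (weightedSum f hf) = c :=
  apply_eq_of_mem_weakStarClusterPoints hy <| hfc.congr fun k => (weightedSum_single (φ k)).symm

lemma exists_weightedSum_le (v : ℓ¹(ℕ, ℝ)) {ε : ℝ} (hε : 0 < ε) :
    ∃ (f : ℕ → ℝ) (hf : ∀ i, |f i| ≤ 1), (∀ᶠ i in atTop, f i = 1) ∧ weightedSum f hf v ≤ ε := by
  obtain ⟨N, hN⟩ : ∃ N, ∑' k, ‖v (k + N)‖ < ε :=
    ((tendsto_sum_nat_add fun k => ‖v k‖).eventually (eventually_lt_nhds hε)).exists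
  let f : ℕ → ℝ := fun i => if i < N then -Real.sign (v i) else 1
  have hf : ∀ i, |f i| ≤ 1 := fun i => by
    unfold f
    split_ifs
    · rcases Real.sign_apply_eq (v i) with h | h | h <;> simp [h]
    · simp
  refine ⟨f, hf, eventually_atTop.mpr ⟨N, fun i hi => if_neg hi.not_gt⟩, ?_⟩
  have hv : Summable fun i => ‖v i‖ := by
    simpa using (lp.memℓp v).summable (by norm_num : 0 < (1 : ℝ≥0∞).toReal)
  have hfv : Summable fun i => f i * v i := .of_norm_bounded hv fun i => by
    rw [norm_mul]
    exact mul_le_of_le_one_left (norm_nonneg _) ((Real.norm_eq_abs _).trans_le (hf i))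
  have head : ∑ i ∈ Finset.range N, f i * v i ≤ 0 := Finset.sum_nonpos fun i hi => by
    simp only [f, if_pos (Finset.mem_range.mp hi), neg_mul, neg_nonpos]
    exact Real.sign_mul_nonneg _
  have tail : ∑' k, f (k + N) * v (k + N) ≤ ∑' k, ‖v (k + N)‖ :=
    Summable.tsum_le_tsum (fun k => by simp [f, le_abs_self])
      ((summable_nat_add_iff N).mpr hfv) ((summable_nat_add_iff N).mpr hv)
  rw [weightedSum_apply, ← hfv.sum_add_tsum_nat_add N]
  linarith

lemma one_le_infDist_of_mem_weakStarClusterPoints (hφ : Tendsto φ atTop atTop)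
    (hy : y ∈ weakStarClusterPoints (stdBasisSeq ∘ φ)) :
    1 ≤ Metric.infDist y (Set.range (inclusionInDoubleDual ℝ ℓ¹(ℕ, ℝ))) := by
  rw [Metric.le_infDist (Set.range_nonempty _)]
  rintro _ ⟨v, rfl⟩
  refine le_of_forall_pos_le_add fun ε hε => ?_
  obtain ⟨f, hf, hf_one, hfv⟩ := exists_weightedSum_le v hε
  have hyf : y (weightedSum f hf) = 1 := weightedSum_eq_of_mem_weakStarClusterPoints hy hf <|
    tendsto_const_nhds.congr' <| (hφ.eventually hf_one).mono fun _ h => h.symm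
  calc 1 = y (weightedSum f hf) - inclusionInDoubleDual ℝ _ v (weightedSum f hf)
        + weightedSum f hf v := by rw [hyf, NormedSpace.dual_def]; ring
    _ ≤ dist y (inclusionInDoubleDual ℝ _ v) + ε :=
      add_le_add (sub_apply_le_dist _ _ norm_weightedSum_le) hfv

lemma infDist_eq_one_of_mem_weakStarClusterPoints (hφ : Tendsto φ atTop atTop)
    (hy : y ∈ weakStarClusterPoints (stdBasisSeq ∘ φ)) :
    Metric.infDist y (Set.range (inclusionInDoubleDual ℝ ℓ¹(ℕ, ℝ))) = 1 :=
  le_antisymm ((infDist_range_inclusionInDoubleDual_le_norm y).trans <|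
      norm_le_of_mem_weakStarClusterPoints_s7 (fun _ => (norm_stdBasisSeq _).le) hy)
    (one_le_infDist_of_mem_weakStarClusterPoints hφ hy)

lemma two_le_diam_weakStarClusterPoints (hφ : Function.Injective φ) :
    2 ≤ Metric.diam (weakStarClusterPoints (stdBasisSeq ∘ φ)) := by
  have hbdd : ∀ k, ‖stdBasisSeq k‖ ≤ 1 := fun _ => (norm_stdBasisSeq _).le
  have heven : StrictMono (2 * · : ℕ → ℕ) := fun a b h => show 2 * a < 2 * b by omega
  have hodd : StrictMono (2 * · + 1 : ℕ → ℕ) := fun a b h => show 2 * a + 1 < 2 * b + 1 by omega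
  obtain ⟨y₀, hy₀⟩ :=
    weakStarClusterPoints_nonempty (x := stdBasisSeq ∘ φ ∘ (2 * ·)) fun _ => hbdd _
  obtain ⟨y₁, hy₁⟩ :=
    weakStarClusterPoints_nonempty (x := stdBasisSeq ∘ φ ∘ (2 * · + 1)) fun _ => hbdd _
  classical
  let f : ℕ → ℝ := fun i => if i ∈ Set.range (φ ∘ (2 * ·)) then 1 else -1
  have hf : ∀ i, |f i| ≤ 1 := fun i => by
    unfold f
    split_ifs <;> norm_num
  have h₀ : y₀ (weightedSum f hf) = 1 := weightedSum_eq_of_mem_weakStarClusterPoints hy₀ hf <|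
    tendsto_const_nhds.congr fun k => (if_pos ⟨k, rfl⟩).symm
  have hodd_notMem (k : ℕ) : φ (2 * k + 1) ∉ Set.range (φ ∘ (2 * ·)) := fun ⟨m, hm⟩ => by
    have : 2 * m = 2 * k + 1 := hφ hm
    omega
  have h₁ : y₁ (weightedSum f hf) = -1 := weightedSum_eq_of_mem_weakStarClusterPoints hy₁ hf <|
    tendsto_const_nhds.congr fun k => (if_neg (hodd_notMem k)).symm
  calc (2 : ℝ) = y₀ (weightedSum f hf) - y₁ (weightedSum f hf) := by rw [h₀, h₁]; norm_num
    _ ≤ dist y₀ y₁ := sub_apply_le_dist y₀ y₁ norm_weightedSum_le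
    _ ≤ Metric.diam (weakStarClusterPoints (stdBasisSeq ∘ φ)) :=
      Metric.dist_le_diam_of_mem (isBounded_weakStarClusterPoints fun _ => hbdd _)
        (weakStarClusterPoints_comp_subset_s7 heven.tendsto_atTop hy₀)
        (weakStarClusterPoints_comp_subset_s7 hodd.tendsto_atTop hy₁)

lemma diam_weakStarClusterPoints_eq_two (hφ : Function.Injective φ) :
    Metric.diam (weakStarClusterPoints (stdBasisSeq ∘ φ)) = 2 :=
  le_antisymm
    ((diam_weakStarClusterPoints_le zero_le_one fun _ => (norm_stdBasisSeq _).le).trans_eq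
      (mul_one 2))
    (two_le_diam_weakStarClusterPoints hφ)

end StdBasisSeq

/-- For the sequence `(e_k)` in `ℓ¹`: every weak* cluster point has distance `1`
to `ℓ¹`, the cluster set has diameter `2`; the same holds for every subsequence, so
`δ̃(e_k) = 2`. -/
theorem statement7 :
    (∀ y ∈ weakStarClusterPoints stdBasisSeq,
      Metric.infDist y (Set.range fun v : lp (fun _ : ℕ => ℝ) 1 =>
        inclusionInDoubleDual ℝ (lp (fun _ : ℕ => ℝ) 1) v) = 1) ∧
    Metric.diam (weakStarClusterPoints stdBasisSeq) = 2 ∧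
    (∀ φ : ℕ → ℕ, StrictMono φ →
      (∀ y ∈ weakStarClusterPoints (stdBasisSeq ∘ φ),
        Metric.infDist y (Set.range fun v : lp (fun _ : ℕ => ℝ) 1 =>
          inclusionInDoubleDual ℝ (lp (fun _ : ℕ => ℝ) 1) v) = 1) ∧
      Metric.diam (weakStarClusterPoints (stdBasisSeq ∘ φ)) = 2) ∧
    deltaTilde stdBasisSeq = 2 := by
  have hinfDist : ∀ φ : ℕ → ℕ, StrictMono φ → ∀ y ∈ weakStarClusterPoints (stdBasisSeq ∘ φ),
      Metric.infDist y (Set.range (inclusionInDoubleDual ℝ ℓ¹(ℕ, ℝ))) = 1 :=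
    fun _ hφ _ => infDist_eq_one_of_mem_weakStarClusterPoints hφ.tendsto_atTop
  have hdiam : ∀ φ : ℕ → ℕ, StrictMono φ →
      Metric.diam (weakStarClusterPoints (stdBasisSeq ∘ φ)) = 2 :=
    fun _ hφ => diam_weakStarClusterPoints_eq_two hφ.injective
  have hdeltas : {d : ℝ | ∃ φ : ℕ → ℕ, StrictMono φ ∧ d = deltaSeq (stdBasisSeq ∘ φ)} = {2} :=
    Set.eq_singleton_iff_unique_mem.mpr ⟨⟨id, strictMono_id, (hdiam id strictMono_id).symm⟩,
      fun _ ⟨φ, hφ, hd⟩ => hd.trans (hdiam φ hφ)⟩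
  refine ⟨hinfDist id strictMono_id, hdiam id strictMono_id,
    fun φ hφ => ⟨hinfDist φ hφ, hdiam φ hφ⟩, ?_⟩
  rw [deltaTilde, hdeltas, csInf_singleton]
end
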